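/- If A is a complete set and c̄ is a tuple such that tp(c̄/A) ∈ S_*(A), then acl(A ∪ c̄) ∩ P^C = P^A, where acl denotes the algebraic closure in C. -/

import Mathlib

open FirstOrder FirstOrder.Language Cardinal Set

universe u v

namespace OverP

/-- `f` fixes `B` pointwise. -/
def FixesPointwise {C : Type u} {N : Set C} (f : ↥N → C) (B : Set C) : Prop :=
  ∀ x : ↥N, (x : C) ∈ B → f x = x

variable {L : FirstOrder.Language.{u, u}} {C : Type u} [L.Structure C]

/-- The interpretation `P^C` of the distinguished unary predicate `P` in the monster `C`. -/
def PSet (P : L.Relations 1) : Set C := {x | Structure.RelMap P ![x]}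

/-- `|T|`, the cardinality of the theory: the number of symbols plus `ℵ₀`. -/
noncomputable def TCard (L : FirstOrder.Language.{u, u}) : Cardinal.{u} := L.card ⊔ ℵ₀

/-- `A` is a complete set: any existential statement `(∃ x̄ ⊆ P) ψ(x̄, b̄)` with parameters
`b̄ ⊆ A` that holds in `C` has a witness inside `P ∩ A`. -/
def IsComplete (P : L.Relations 1) (A : Set C) : Prop :=
  ∀ (n m : ℕ) (ψ : L.Formula (Fin n ⊕ Fin m)) (b : Fin m → C),
    (∀ i, b i ∈ A) →
    (∃ a : Fin n → C, (∀ i, a i ∈ PSet P) ∧ ψ.Realize (Sum.elim a b)) →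
    ∃ a : Fin n → C, (∀ i, a i ∈ PSet P ∩ A) ∧ ψ.Realize (Sum.elim a b)

/-- `tp(c̄/A)`: the complete type of the tuple `c̄` over the parameter set `A`, represented as
the set of formulas in variables `α` with parameter-variables indexed by `↥A` (interpreted by
inclusion) that `c̄` satisfies in `C`. -/
def typeOf (A : Set C) {α : Type v} (c : α → C) : Set (L.Formula (α ⊕ ↥A)) :=
  {φ | φ.Realize (Sum.elim c (Subtype.val : ↥A → C))}

/-- A set of formulas over parameters `A` is realized by a tuple all of whose entries lie
in `X`. -/
def RealizedIn (X : Set C) {A : Set C} {α : Type v} (p : Set (L.Formula (α ⊕ ↥A))) : Prop :=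
  ∃ c : α → C, (∀ i, c i ∈ X) ∧ ∀ φ ∈ p, φ.Realize (Sum.elim c (Subtype.val : ↥A → C))

/-- Consistency of a partial type over `A` (in the monster model: realizability in `C`). -/
def Consistent {A : Set C} {α : Type v} (p : Set (L.Formula (α ⊕ ↥A))) : Prop :=
  ∃ c : α → C, ∀ φ ∈ p, φ.Realize (Sum.elim c (Subtype.val : ↥A → C))

/-- Semantic entailment `r ⊢ p` between sets of formulas over `A`. -/
def Entails {A : Set C} {α : Type v} (r p : Set (L.Formula (α ⊕ ↥A))) : Prop :=
  ∀ c : α → C, (∀ φ ∈ r, φ.Realize (Sum.elim c (Subtype.val : ↥A → C))) →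
    ∀ φ ∈ p, φ.Realize (Sum.elim c (Subtype.val : ↥A → C))

/-- A partial type `p` is `λ`-isolated if some subset `r ⊆ p` with `|r| < λ` entails it. -/
def IsIsolated (lam : Cardinal.{u}) {A : Set C} {α : Type v}
    (p : Set (L.Formula (α ⊕ ↥A))) : Prop :=
  ∃ r ⊆ p, #↥r < Cardinal.lift.{v} lam ∧ Entails r p

/-- `M` is `λ`-saturated relative to `X`: every type over a subset of `M` of cardinality `< λ`
realized by a tuple from `X` is realized by a tuple from `M`. -/
def IsSaturatedIn (lam : Cardinal.{u}) (M X : Set C) : Prop :=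
  ∀ B : Set C, B ⊆ M → #↥B < lam →
    ∀ (n : ℕ) (p : Set (L.Formula (Fin n ⊕ ↥B))),
      RealizedIn (L := L) X p → RealizedIn (L := L) M p

/-- `M` is `λ`-saturated: every consistent type over a subset of `M` of cardinality `< λ`
is realized in `M`. -/
def IsSaturated (lam : Cardinal.{u}) (M : Set C) : Prop :=
  IsSaturatedIn (L := L) lam M Set.univ

/-- `M` is (the universe of) an elementary submodel of the monster `C` (Tarski–Vaught test). -/
def IsElementary (M : Set C) : Prop :=
  ∀ (n : ℕ) (φ : L.Formula (Fin n ⊕ Fin 1)) (b : Fin n → C),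
    (∀ i, b i ∈ M) →
    (∃ y : C, φ.Realize (Sum.elim b fun _ => y)) →
    ∃ y ∈ M, φ.Realize (Sum.elim b fun _ => y)

/-- The induced structure on a subset of `C`, in a language with no function symbols. -/
def inducedStructure (hf : ∀ k, IsEmpty (L.Functions k)) (A : Set C) : L.Structure ↥A where
  funMap {k} f _ := ((hf k).false f).elim
  RelMap {k} r x := Structure.RelMap r fun i => (x i : C)

/-- `A ≡ B`: the substructures `C|_A` and `C|_B` are elementarily equivalent. -/
def EquivSets (hf : ∀ k, IsEmpty (L.Functions k)) (A B : Set C) : Prop :=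
  letI := inducedStructure hf A
  letI := inducedStructure hf B
  (↥A) ≅[L] (↥B)

/-- `X` is an elementary substructure of `Y` (both viewed as substructures of `C`). -/
def IsElemPair (hf : ∀ k, IsEmpty (L.Functions k)) (X Y : Set C) : Prop :=
  ∃ h : X ⊆ Y,
    letI := inducedStructure hf X
    letI := inducedStructure hf Y
    ∀ (n : ℕ) (φ : L.Formula (Fin n)) (a : Fin n → ↥X),
      φ.Realize a ↔ φ.Realize (fun i => Set.inclusion h (a i))

/-- The tuple `c̄` is weakly orthogonal to `P` over `A`:
`P ∩ (A ∪ c̄) = P ∩ A` and `A ∪ c̄` is complete (i.e. `tp(c̄/A) ∈ S_*(A)`). -/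
def IsStarTuple (P : L.Relations 1) (A : Set C) {α : Type v} (c : α → C) : Prop :=
  PSet P ∩ (A ∪ Set.range c) = PSet P ∩ A ∧ IsComplete P (A ∪ Set.range c)

/-- `S_*(A)`: complete `n`-types over `A` weakly orthogonal to `P`. -/
def starTypes (P : L.Relations 1) (A : Set C) (n : ℕ) :
    Set (Set (L.Formula (Fin n ⊕ ↥A))) :=
  {p | ∃ c : Fin n → C, p = typeOf A c ∧ IsStarTuple P A c}

/-- `A` is stable over `P`: for every `A' ≡ A`, `|S_*(A')| ≤ |A'| ^ |T|`. -/
def IsStable (hf : ∀ k, IsEmpty (L.Functions k)) (P : L.Relations 1) (A : Set C) : Prop :=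
  ∀ A' : Set C, EquivSets hf A' A → ∀ n : ℕ, #↥(starTypes P A' n) ≤ #↥A' ^ TCard L

/-- `N` is `λ`-constructible over `B`: `N = B ∪ {d_i : i < o}` for some `λ`-construction,
i.e. each `tp(d_i / B ∪ {d_j : j < i})` is `λ`-isolated. -/
def IsConstructible (lam : Cardinal.{u}) (B N : Set C) : Prop :=
  ∃ (o : Ordinal.{u}) (d : Ordinal.{u} → C),
    N = B ∪ d '' Set.Iio o ∧
    ∀ i < o, IsIsolated lam (typeOf (L := L) (B ∪ d '' Set.Iio i) (fun _ : Fin 1 => d i))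


/-- `f` is an elementary map (with respect to satisfaction in the monster `C`). -/
def IsElementaryMap {N : Set C} (f : ↥N → C) : Prop :=
  ∀ (n : ℕ) (φ : L.Formula (Fin n)) (x : Fin n → ↥N),
    φ.Realize (fun i => ((x i : C))) ↔ φ.Realize (fun i => f (x i))

/-- `N` is `λ`-prime over `B`: it is `λ`-saturated and elementarily embeddable over `B` into
every `λ`-saturated model containing `B`. -/
def IsPrime (lam : Cardinal.{u}) (B N : Set C) : Prop :=
  IsSaturated (L := L) lam N ∧
    ∀ M' : Set C, IsElementary (L := L) M' → IsSaturated (L := L) lam M' → B ⊆ M' →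
      ∃ f : ↥N → C, (∀ x, f x ∈ M') ∧ FixesPointwise f B ∧ IsElementaryMap (L := L) f

/-- `N` is `λ`-atomic over `B`: the type of every finite tuple from `N` over `B` is
`λ`-isolated over some subset of `B` of cardinality `< λ`. -/
def IsAtomic (lam : Cardinal.{u}) (B N : Set C) : Prop :=
  ∀ (n : ℕ) (d : Fin n → C), (∀ i, d i ∈ N) →
    ∃ B₀ : Set C, B₀ ⊆ B ∧ #↥B₀ < lam ∧
      ∃ r : Set (L.Formula (Fin n ⊕ ↥B₀)), #↥r < lam ∧ r ⊆ typeOf (L := L) B₀ d ∧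
        ∀ c : Fin n → C, (∀ φ ∈ r, φ.Realize (Sum.elim c (Subtype.val : ↥B₀ → C))) →
          ∀ φ ∈ typeOf (L := L) B d, φ.Realize (Sum.elim c (Subtype.val : ↥B → C))

/-- The algebraic closure of a set `B` in `C`. -/
def acl (B : Set C) : Set C :=
  {x | ∃ (m : ℕ) (φ : L.Formula (Fin 1 ⊕ Fin m)) (b : Fin m → C),
    (∀ i, b i ∈ B) ∧ φ.Realize (Sum.elim (fun _ => x) b) ∧
    {y : C | φ.Realize (Sum.elim (fun _ => y) b)}.Finite}


/-- Parity of an ordinal: `β` is even if `β = γ + k` with `γ` zero or limit and `k` even. -/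
def OrdEven (β : Ordinal.{u}) : Prop :=
  ∃ (γ : Ordinal.{u}) (k : ℕ), (γ = 0 ∨ Order.IsSuccLimit γ) ∧ Even k ∧ β = γ + k

/-- Consistency for types with parameters from all of `C` (indexed by `C` itself). -/
def ConsistentC {n : ℕ} (p : Set (L.Formula (Fin n ⊕ C))) : Prop :=
  ∃ x : Fin n → C, ∀ φ ∈ p, φ.Realize (Sum.elim x id)

/-- Two sets of formulas are explicitly contradictory. -/
def ExplicitlyContradictory {n : ℕ} (r s : Set (L.Formula (Fin n ⊕ C))) : Prop :=
  ∃ φ, φ ∈ r ∧ Formula.not φ ∈ s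

/-- `r` is a `Δ`-type over `A`: it consists of formulas `±ψ(x̄, ā)` with `ψ ∈ Δ`, `ā ⊆ A`. -/
def IsDeltaTypeOver {n : ℕ} (Δ : Set (Σ k : ℕ, L.Formula (Fin n ⊕ Fin k))) (A : Set C)
    (r : Set (L.Formula (Fin n ⊕ C))) : Prop :=
  ∀ φ ∈ r, ∃ (k : ℕ) (ψ : L.Formula (Fin n ⊕ Fin k)) (a : Fin k → C),
    (⟨k, ψ⟩ : Σ k : ℕ, L.Formula (Fin n ⊕ Fin k)) ∈ Δ ∧ (∀ i, a i ∈ A) ∧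
    (φ = ψ.relabel (Sum.map id a) ∨ φ = Formula.not (ψ.relabel (Sum.map id a)))

/-- The formula `(∀ z̄ ⊆ P)[ψ(x̄, d̄, z̄) ↔ Θ(z̄, b̄)]` as a formula in `x̄` with parameters. -/
noncomputable def defFml (P : L.Relations 1) {n m l s : ℕ}
    (ψ : L.Formula (Fin n ⊕ (Fin m ⊕ Fin l))) (Θ : L.Formula (Fin l ⊕ Fin s))
    (d : Fin m → C) (b : Fin s → C) : L.Formula (Fin n ⊕ C) :=
  Formula.iAlls (Fin l)
    (Formula.imp
      (((Finset.univ : Finset (Fin l)).toList.map fun k : Fin l =>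
        (P.formula₁ (Term.var (Sum.inr k)) : L.Formula ((Fin n ⊕ C) ⊕ Fin l))).foldr (· ⊓ ·) ⊤)
      (Formula.iff
        (ψ.relabel (Sum.elim (fun i => Sum.inl (Sum.inl i))
          (Sum.elim (fun j => Sum.inl (Sum.inr (d j))) Sum.inr)))
        (Θ.relabel (Sum.elim Sum.inr (fun j => Sum.inl (Sum.inr (b j)))))))

/-- `Ψ` is a uniform family of definitions for `ψ`-types over `P ∩ A` (as in Fact 10):
for every `ψ(x̄, ȳ, z̄)` and `ā, d̄ ⊆ A` there is `c̄ ⊆ A ∩ P` such that for all `z̄ ⊆ A ∩ P`,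
`ψ(ā, d̄, z̄)` holds iff `Ψ_ψ(z̄, c̄)` holds. -/
def IsUniformDefFamily (P : L.Relations 1) (A : Set C)
    (Ψ : ∀ (n m l : ℕ), L.Formula (Fin n ⊕ (Fin m ⊕ Fin l)) →
      Σ s : ℕ, L.Formula (Fin l ⊕ Fin s)) : Prop :=
  ∀ (n m l : ℕ) (ψ : L.Formula (Fin n ⊕ (Fin m ⊕ Fin l))) (a : Fin n → C) (dm : Fin m → C),
    (∀ i, a i ∈ A) → (∀ j, dm j ∈ A) →
    ∃ c : Fin (Ψ n m l ψ).1 → C, (∀ i, c i ∈ A ∩ PSet P) ∧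
      ∀ z : Fin l → C, (∀ k, z k ∈ A ∩ PSet P) →
        (ψ.Realize (Sum.elim a (Sum.elim dm z)) ↔ (Ψ n m l ψ).2.Realize (Sum.elim z c))

-- The rank `R^n_A(p, Δ₁, Δ₂, λ) ≥ α` of Definition 3.9,
-- relative to a fixed uniform definition family `Ψ`.
open Classical in
noncomputable def RankGE (P : L.Relations 1) (A : Set C) (n : ℕ)
    (Δ₁ : Set (Σ k : ℕ, L.Formula (Fin n ⊕ Fin k)))
    (Δ₂ : Set (Σ m : ℕ, Σ l : ℕ, L.Formula (Fin n ⊕ (Fin m ⊕ Fin l))))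
    (Ψ : ∀ (n' m l : ℕ), L.Formula (Fin n' ⊕ (Fin m ⊕ Fin l)) →
      Σ s : ℕ, L.Formula (Fin l ⊕ Fin s))
    (lam : Cardinal.{u}) : Ordinal.{u} → Set (L.Formula (Fin n ⊕ C)) → Prop
  | α, p =>
    if α = 0 then ConsistentC p
    else if hs : ∃ β : Ordinal.{u}, α = β + 1 then
      if OrdEven hs.choose then
        -- clause (iii): α = β + 1, β even
        ∀ μ < lam, ∀ q ⊆ p, q.Finite →
          ∃ R : Set (Set (L.Formula (Fin n ⊕ C))),
            μ + 1 ≤ #↥R ∧ (∀ r ∈ R, IsDeltaTypeOver Δ₁ A r) ∧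
            R.Pairwise ExplicitlyContradictory ∧
            ∀ r ∈ R, RankGE P A n Δ₁ Δ₂ Ψ lam hs.choose (q ∪ r)
      else
        -- clause (iv): α = β + 1, β odd
        ∀ μ < lam, ∀ q ⊆ p, q.Finite →
          ∀ (ι : Type u), #ι ≤ μ + 1 →
          ∀ g : ι → (Σ m : ℕ, Σ l : ℕ, L.Formula (Fin n ⊕ (Fin m ⊕ Fin l))),
            (∀ i, g i ∈ Δ₂) →
          ∀ d : (i : ι) → Fin (g i).1 → C, (∀ i j, d i j ∈ A) →
          ∃ b : (i : ι) → Fin (Ψ n (g i).1 (g i).2.1 (g i).2.2).1 → C,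
            (∀ i j, b i j ∈ A ∩ PSet P) ∧
            RankGE P A n Δ₁ Δ₂ Ψ lam hs.choose
              (q ∪ ⋃ i, {defFml P (g i).2.2 (Ψ n (g i).1 (g i).2.1 (g i).2.2).2 (d i) (b i)})
    else
      -- limit case
      ∀ β < α, RankGE P A n Δ₁ Δ₂ Ψ lam β p
  termination_by α _ => α
  decreasing_by
  · exact lt_of_lt_of_le
      (by rw [Ordinal.add_one_eq_succ]; exact Order.lt_succ _) hs.choose_spec.ge
  · exact lt_of_lt_of_le
      (by rw [Ordinal.add_one_eq_succ]; exact Order.lt_succ _) hs.choose_spec.ge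
  · assumption

/-- The trivial type `{x̄ = x̄}`. -/
def eqType (L : FirstOrder.Language.{u, u}) (C : Type u) [L.Structure C] (n : ℕ) :
    Set (L.Formula (Fin n ⊕ C)) :=
  Set.range fun i : Fin n =>
    Term.equal (Term.var (Sum.inl i)) (Term.var (Sum.inl i))

/-- Rewrite a type over `A` as a type with parameters from `C`. -/
def toC {n : ℕ} {A : Set C} (p : Set (L.Formula (Fin n ⊕ ↥A))) :
    Set (L.Formula (Fin n ⊕ C)) :=
  (Formula.relabel (Sum.map id (Subtype.val : ↥A → C))) '' p


/-- Realizing a finite conjunction at the `Formula` level. -/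
theorem realize_iInf' {L : FirstOrder.Language.{u, u}} {C : Type u} [L.Structure C]
    {α β : Type*} (s : Finset β) (f : β → L.Formula α) (v : α → C) :
    Formula.Realize (BoundedFormula.iInf fun b : ↥s => f b) v ↔ ∀ b ∈ s, (f b).Realize v := by
  rw [Formula.Realize, BoundedFormula.realize_iInf]
  exact ⟨fun h b hb => h ⟨b, hb⟩, fun h b => h b.1 b.2⟩

/-- Remark 3.7: if `A` is complete and `tp(c̄/A) ∈ S_*(A)`, then
`acl(A ∪ c̄) ∩ P^C = P^A`. -/
theorem acl_star_type (P : L.Relations 1) (A : Set C) (hA : IsComplete P A)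
    (n : ℕ) (c : Fin n → C) (hc : typeOf (L := L) A c ∈ starTypes P A n) :
    acl (L := L) (A ∪ Set.range c) ∩ PSet P = A ∩ PSet P := by
  classical
  obtain ⟨c', htp, hPeq, hcomp⟩ := hc
  have htr : ∀ φ : L.Formula (Fin n ⊕ ↥A),
      φ.Realize (Sum.elim c (Subtype.val : ↥A → C)) ↔
        φ.Realize (Sum.elim c' (Subtype.val : ↥A → C)) := fun φ => Set.ext_iff.mp htp φ
  ext e
  simp only [Set.mem_inter_iff]
  constructor
  · rintro ⟨⟨m, φ, b, hb, hφe, hfin⟩, heP⟩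
    refine ⟨?_, heP⟩
    -- encode the parameters `b` as images of variables over `A` and `c`
    have hβ : ∀ i, ∃ v : Fin n ⊕ ↥A, Sum.elim c (Subtype.val : ↥A → C) v = b i := by
      intro i
      rcases hb i with h | ⟨k, hk⟩
      · exact ⟨Sum.inr ⟨b i, h⟩, rfl⟩
      · exact ⟨Sum.inl k, hk⟩
    choose β hβ using hβ
    -- `S` : the (finite) set of solutions of `φ` lying in `P`
    set S : Set C := {y | φ.Realize (Sum.elim (fun _ => y) b)} ∩ PSet P with hSdef
    have hSfin : S.Finite := hfin.inter_of_left _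
    have heS : e ∈ S := ⟨hφe, heP⟩
    set j := hSfin.toFinset.card with hj
    -- an enumeration of `S`
    let w : Fin j → C := fun k => (hSfin.toFinset.equivFin.symm k : C)
    have hwinj : Function.Injective w := fun k k' h =>
      hSfin.toFinset.equivFin.symm.injective (Subtype.val_injective h)
    have hwS : ∀ k, w k ∈ S := fun k => hSfin.mem_toFinset.mp (hSfin.toFinset.equivFin.symm k).2
    -- the formula `ψ(x₁,…,x_j, ȳ)` saying the `x`'s are distinct solutions of `φ`
    set ψ : L.Formula (Fin j ⊕ Fin m) :=
      (BoundedFormula.iInf fun p : ↥(Finset.univ.filter fun p : Fin j × Fin j => p.1 ≠ p.2) =>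
        (fun p : Fin j × Fin j =>
          Formula.not (Term.equal (Term.var (Sum.inl p.1)) (Term.var (Sum.inl p.2)))) p) ⊓
      BoundedFormula.iInf fun k : ↥(Finset.univ : Finset (Fin j)) => (fun k : Fin j =>
        φ.relabel (Sum.elim (fun _ : Fin 1 => Sum.inl k) Sum.inr)) k with hψdef
    have hcompfun : ∀ (a : Fin j → C) (d : Fin m → C) (k : Fin j),
        (Sum.elim a d) ∘ (Sum.elim (fun _ : Fin 1 => Sum.inl k) Sum.inr)
          = Sum.elim (fun _ : Fin 1 => a k) d := by
      intro a d k; funext x; cases x <;> rfl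
    have hψ : ∀ (a : Fin j → C) (d : Fin m → C),
        ψ.Realize (Sum.elim a d) ↔
          (Function.Injective a ∧ ∀ k, φ.Realize (Sum.elim (fun _ : Fin 1 => a k) d)) := by
      intro a d
      rw [hψdef, Formula.realize_inf, realize_iInf' _ (fun p : Fin j × Fin j => Formula.not
          (Term.equal (Term.var (Sum.inl p.1)) (Term.var (Sum.inl p.2)))),
        realize_iInf' _ (fun k : Fin j => φ.relabel (Sum.elim (fun _ : Fin 1 => Sum.inl k) Sum.inr))]
      simp only [Finset.mem_filter, Finset.mem_univ, true_and, forall_true_left,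
        Formula.realize_not, Formula.realize_equal, Term.realize_var, Sum.elim_inl,
        Formula.realize_relabel, Prod.forall]
      constructor
      · rintro ⟨h1, h2⟩
        refine ⟨fun k k' hkk' => by_contra fun hne => h1 k k' hne hkk', fun k => ?_⟩
        have := h2 k
        rwa [hcompfun a d k] at this
      · rintro ⟨h1, h2⟩
        refine ⟨fun k k' hne heq => hne (h1 heq), fun k => ?_⟩
        rw [hcompfun a d k]
        exact h2 k
    -- the formula over `A` (in the variables of `c`) expressing
    -- `(∃ x̄ ⊆ P) ψ(x̄, b̄)`
    set η : L.Formula ((Fin n ⊕ ↥A) ⊕ Fin j) :=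
      (BoundedFormula.iInf fun k : ↥(Finset.univ : Finset (Fin j)) => (fun k : Fin j =>
        (P.formula₁ (Term.var (Sum.inr k)) : L.Formula ((Fin n ⊕ ↥A) ⊕ Fin j))) k) ⊓
      ψ.relabel (Sum.elim Sum.inr fun i => Sum.inl (β i)) with hηdef
    have hη : ∀ (v : Fin n ⊕ ↥A → C) (a : Fin j → C),
        η.Realize (Sum.elim v a) ↔
          ((∀ k, a k ∈ PSet P) ∧ ψ.Realize (Sum.elim a fun i => v (β i))) := by
      intro v a
      have h1 : (Sum.elim v a) ∘ (Sum.elim Sum.inr fun i => Sum.inl (β i))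
          = Sum.elim a fun i => v (β i) := by funext x; cases x <;> rfl
      rw [hηdef, Formula.realize_inf, realize_iInf' _ (fun k : Fin j =>
          (P.formula₁ (Term.var (Sum.inr k)) : L.Formula ((Fin n ⊕ ↥A) ⊕ Fin j))),
        Formula.realize_relabel, h1]
      simp only [Finset.mem_univ, forall_true_left, Formula.realize_rel₁, Term.realize_var,
        Sum.elim_inr, PSet, Set.mem_setOf_eq]
    set χ : L.Formula (Fin n ⊕ ↥A) :=
      Formula.iExs (Fin j) η with hχdef
    -- `χ` is realized by `c`
    have hbfun : (fun i => Sum.elim c (Subtype.val : ↥A → C) (β i)) = b := funext hβ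
    have hχc : χ.Realize (Sum.elim c (Subtype.val : ↥A → C)) := by
      rw [hχdef, Formula.realize_iExs]
      refine ⟨w, ?_⟩
      have : η.Realize (Sum.elim (Sum.elim c (Subtype.val : ↥A → C)) w) := by
        rw [hη]
        refine ⟨fun k => (hwS k).2, ?_⟩
        rw [hbfun, hψ]
        exact ⟨hwinj, fun k => (hwS k).1⟩
      exact this
    -- transfer to `c'` and extract a witness tuple in `P`
    have hχc' : χ.Realize (Sum.elim c' (Subtype.val : ↥A → C)) := (htr χ).mp hχc
    rw [hχdef, Formula.realize_iExs] at hχc'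
    obtain ⟨a₀, ha₀⟩ := hχc'
    have ha₀' : η.Realize (Sum.elim (Sum.elim c' (Subtype.val : ↥A → C)) a₀) := ha₀
    rw [hη] at ha₀'
    obtain ⟨ha₀P, ha₀ψ⟩ := ha₀'
    -- apply completeness of `A ∪ range c'`
    have hb'mem : ∀ i, Sum.elim c' (Subtype.val : ↥A → C) (β i) ∈ A ∪ Set.range c' := by
      intro i
      cases h : β i with
      | inl k => exact Or.inr ⟨k, rfl⟩
      | inr x => exact Or.inl x.2
    obtain ⟨a, haP, haψ⟩ :=
      hcomp j m ψ (fun i => Sum.elim c' (Subtype.val : ↥A → C) (β i)) hb'mem ⟨a₀, ha₀P, ha₀ψ⟩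
    have haPA : ∀ k, a k ∈ PSet P ∩ A := fun k => hPeq ▸ haP k
    -- transfer the witness statement back to `c`
    set g : Fin j ⊕ Fin m → Fin n ⊕ ↥A :=
      Sum.elim (fun k => Sum.inr ⟨a k, (haPA k).2⟩) β with hgdef
    have hρc' : (ψ.relabel g).Realize (Sum.elim c' (Subtype.val : ↥A → C)) := by
      rw [Formula.realize_relabel]
      have : Sum.elim c' (Subtype.val : ↥A → C) ∘ g
          = Sum.elim a fun i => Sum.elim c' (Subtype.val : ↥A → C) (β i) := by
        funext x; cases x <;> rfl
      rw [this]
      exact haψ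
    have hρc : (ψ.relabel g).Realize (Sum.elim c (Subtype.val : ↥A → C)) := (htr _).mpr hρc'
    rw [Formula.realize_relabel] at hρc
    have hcg : Sum.elim c (Subtype.val : ↥A → C) ∘ g = Sum.elim a b := by
      funext x
      cases x with
      | inl k => rfl
      | inr i => exact hβ i
    rw [hcg, hψ] at hρc
    obtain ⟨hainj, haφ⟩ := hρc
    -- counting: the range of `a` is all of `S`, hence contains `e`
    have hrange : Set.range a ⊆ S := by
      rintro _ ⟨k, rfl⟩
      exact ⟨haφ k, (haPA k).1⟩
    have h1 : (Set.range a).ncard = j := by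
      rw [← Set.image_univ, Set.ncard_image_of_injective _ hainj, Set.ncard_univ]
      simp
    have h2 : S.ncard = j := Set.ncard_eq_toFinset_card S hSfin
    have hSr : Set.range a = S :=
      Set.eq_of_subset_of_ncard_le hrange (by rw [h1, h2]) hSfin
    rw [← hSr] at heS
    obtain ⟨k, hk⟩ := heS
    exact hk ▸ (haPA k).2
  · rintro ⟨heA, heP⟩
    refine ⟨⟨1, Term.equal (Term.var (Sum.inl 0)) (Term.var (Sum.inr 0)), fun _ => e,
      fun _ => Or.inl heA, ?_, ?_⟩, heP⟩
    · simp [Formula.realize_equal]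
    · have : {y : C | (Term.equal (Term.var (Sum.inl 0)) (Term.var (Sum.inr (0 : Fin 1)))
          : L.Formula (Fin 1 ⊕ Fin 1)).Realize (Sum.elim (fun _ => y) fun _ => e)} ⊆ {e} := by
        intro y hy
        simp only [Set.mem_setOf_eq, Formula.realize_equal, Term.realize_var, Sum.elim_inl,
          Sum.elim_inr] at hy
        exact hy
      exact Set.Finite.subset (Set.finite_singleton e) this

end OverP
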